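/- arXiv:math/0503060 — 2 statements merged into one kernel-verified Lean document; each statement's English description precedes it below -/
import Mathlib

section
/- For fixed x > 1 and μ ≥ 0, the function u ↦ I_μ(xu) K_μ(u) - I_μ(u) K_μ(xu) is nonnegative for all u > 0. -/
open MeasureTheory Set Real

/-- The modified Bessel function of the first kind, via its power series. -/
noncomputable def besselI (ν z : ℝ) : ℝ :=
  ∑' k : ℕ, (z/2) ^ ν * (z/2) ^ (2*k) / ((k.factorial : ℝ) * Real.Gamma (k + ν + 1))

/-- The modified Bessel function of the second kind, via its integral representation
`K_ν(z) = ∫₀^∞ e^{-z cosh t} cosh(ν t) dt` (valid for `z > 0`). -/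
noncomputable def besselK (ν z : ℝ) : ℝ :=
  ∫ t in Ioi (0:ℝ), Real.exp (-z * Real.cosh t) * Real.cosh (ν * t)

/-!
Since `u ≤ x u`, the claim follows from `I_μ(u) ≤ I_μ(x u)` and `0 ≤ K_μ(x u) ≤ K_μ(u)`.
For `μ ≥ 0` every term of the power series of `I_μ` is nonnegative and increasing in `z ≥ 0`,
and the integrand `e^{-z cosh t} cosh (μ t)` of `K_μ` is positive and decreasing in `z`.
-/

theorem Gamma_add_one_le_Gamma_nat_add {ν : ℝ} (hν : 0 ≤ ν) (k : ℕ) :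
    Gamma (ν + 1) ≤ Gamma (k + ν + 1) := by
  induction k with
  | zero => simp
  | succ n ih =>
    have hpos : (0 : ℝ) < n + ν + 1 := by positivity
    calc Gamma (ν + 1) ≤ Gamma (n + ν + 1) := ih
      _ ≤ (n + ν + 1) * Gamma (n + ν + 1) :=
          le_mul_of_one_le_left (Gamma_pos_of_pos hpos).le (by linarith [n.cast_nonneg (α := ℝ)])
      _ = Gamma ((n + 1 : ℕ) + ν + 1) := by
          rw [← Gamma_add_one hpos.ne']; push_cast; ring_nf

section BesselI

noncomputable def besselITerm (ν z : ℝ) (k : ℕ) : ℝ :=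
  (z/2) ^ ν * (z/2) ^ (2*k) / ((k.factorial : ℝ) * Gamma (k + ν + 1))

variable {ν : ℝ}

theorem factorial_mul_Gamma_pos (hν : 0 ≤ ν) (k : ℕ) :
    0 < (k.factorial : ℝ) * Gamma (k + ν + 1) :=
  mul_pos (Nat.cast_pos.2 k.factorial_pos) (Gamma_pos_of_pos (by positivity))

theorem besselITerm_nonneg (hν : 0 ≤ ν) {z : ℝ} (hz : 0 ≤ z) (k : ℕ) : 0 ≤ besselITerm ν z k :=
  div_nonneg (mul_nonneg (rpow_nonneg (by linarith) _) (pow_nonneg (by linarith) _))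
    (factorial_mul_Gamma_pos hν k).le

theorem besselITerm_le_exp_series (hν : 0 ≤ ν) {z : ℝ} (hz : 0 ≤ z) (k : ℕ) :
    besselITerm ν z k ≤ (z/2) ^ ν / Gamma (ν + 1) * (((z/2) ^ 2) ^ k / k.factorial) := by
  have hnum : 0 ≤ (z/2) ^ ν * (z/2) ^ (2*k) :=
    mul_nonneg (rpow_nonneg (by linarith) _) (pow_nonneg (by linarith) _)
  have hden : 0 < (k.factorial : ℝ) * Gamma (ν + 1) :=
    mul_pos (Nat.cast_pos.2 k.factorial_pos) (Gamma_pos_of_pos (by positivity))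
  calc besselITerm ν z k ≤ (z/2) ^ ν * (z/2) ^ (2*k) / ((k.factorial : ℝ) * Gamma (ν + 1)) :=
        div_le_div_of_nonneg_left hnum hden
          (mul_le_mul_of_nonneg_left (Gamma_add_one_le_Gamma_nat_add hν k) (Nat.cast_nonneg _))
    _ = (z/2) ^ ν / Gamma (ν + 1) * (((z/2) ^ 2) ^ k / k.factorial) := by
        rw [pow_mul]; field_simp

theorem summable_besselITerm (hν : 0 ≤ ν) {z : ℝ} (hz : 0 ≤ z) : Summable (besselITerm ν z) :=
  ((summable_pow_div_factorial _).mul_left _).of_nonneg_of_le (besselITerm_nonneg hν hz)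
    (besselITerm_le_exp_series hν hz)

theorem besselITerm_le_of_le (hν : 0 ≤ ν) {z₁ z₂ : ℝ} (hz₁ : 0 ≤ z₁) (h : z₁ ≤ z₂) (k : ℕ) :
    besselITerm ν z₁ k ≤ besselITerm ν z₂ k := by
  have h₂ : z₁ / 2 ≤ z₂ / 2 := by linarith
  refine div_le_div_of_nonneg_right ?_ (factorial_mul_Gamma_pos hν k).le
  exact mul_le_mul (rpow_le_rpow (by linarith) h₂ hν) (pow_le_pow_left₀ (by linarith) h₂ _)
    (pow_nonneg (by linarith) _) (rpow_nonneg (by linarith) _)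

theorem besselI_nonneg (hν : 0 ≤ ν) {z : ℝ} (hz : 0 ≤ z) : 0 ≤ besselI ν z :=
  tsum_nonneg (besselITerm_nonneg hν hz)

theorem besselI_monotoneOn (hν : 0 ≤ ν) : MonotoneOn (besselI ν) (Ici 0) := fun _ hz₁ _ hz₂ h =>
  (summable_besselITerm hν hz₁).tsum_le_tsum (besselITerm_le_of_le hν hz₁ h)
    (summable_besselITerm hν hz₂)

end BesselI

noncomputable def besselKIntegrand (ν z t : ℝ) : ℝ := exp (-z * cosh t) * cosh (ν * t)

theorem cosh_le_exp_abs (y : ℝ) : cosh y ≤ exp |y| := by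
  rw [← cosh_abs, cosh_eq]
  have := exp_le_exp.2 (neg_le_self (abs_nonneg y))
  linarith

theorem sq_div_four_le_cosh {t : ℝ} (ht : 0 ≤ t) : t ^ 2 / 4 ≤ cosh t := by
  rw [cosh_eq]
  have := quadratic_le_exp_of_nonneg ht
  have := exp_pos (-t)
  linarith

theorem besselKIntegrand_nonneg (ν z t : ℝ) : 0 ≤ besselKIntegrand ν z t :=
  mul_nonneg (exp_pos _).le (cosh_pos _).le

theorem besselKIntegrand_le_gaussian (ν : ℝ) {z t : ℝ} (hz : 0 ≤ z) (ht : 0 ≤ t) :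
    besselKIntegrand ν z t ≤ exp (|ν| * t - z * (t ^ 2 / 4)) := by
  calc besselKIntegrand ν z t ≤ exp (-z * (t ^ 2 / 4)) * exp |ν * t| :=
        mul_le_mul (exp_le_exp.2 (by nlinarith [sq_div_four_le_cosh ht])) (cosh_le_exp_abs _)
          (cosh_pos _).le (exp_pos _).le
    _ = exp (|ν| * t - z * (t ^ 2 / 4)) := by
        rw [← exp_add, abs_mul, abs_of_nonneg ht]; ring_nf

theorem integrableOn_besselKIntegrand (ν : ℝ) {z : ℝ} (hz : 0 < z) :
    IntegrableOn (besselKIntegrand ν z) (Ioi 0) := by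
  refine integrable_of_isBigO_exp_neg one_pos
    (by unfold besselKIntegrand; fun_prop) (Asymptotics.IsBigO.of_bound 1 ?_)
  filter_upwards [Filter.eventually_ge_atTop (4 * (|ν| + 1) / z),
    Filter.eventually_ge_atTop 0] with t ht_large ht
  rw [div_le_iff₀ hz] at ht_large
  rw [norm_of_nonneg (besselKIntegrand_nonneg ν z t), norm_of_nonneg (exp_pos _).le, one_mul]
  refine (besselKIntegrand_le_gaussian ν hz.le ht).trans (exp_le_exp.2 ?_)
  nlinarith

theorem besselKIntegrand_anti (ν t : ℝ) {z₁ z₂ : ℝ} (h : z₁ ≤ z₂) :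
    besselKIntegrand ν z₂ t ≤ besselKIntegrand ν z₁ t :=
  mul_le_mul_of_nonneg_right (exp_le_exp.2 (by nlinarith [cosh_pos t])) (cosh_pos _).le

theorem besselK_nonneg (ν z : ℝ) : 0 ≤ besselK ν z :=
  setIntegral_nonneg measurableSet_Ioi fun t _ => besselKIntegrand_nonneg ν z t

theorem besselK_antitoneOn (ν : ℝ) : AntitoneOn (besselK ν) (Ioi 0) := fun _ hz₁ _ hz₂ h =>
  setIntegral_mono_on (integrableOn_besselKIntegrand ν hz₂) (integrableOn_besselKIntegrand ν hz₁)
    measurableSet_Ioi fun t _ => besselKIntegrand_anti ν t h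

theorem stmt_8 (μ x : ℝ) (hμ : 0 ≤ μ) (hx : 1 < x) :
    ∀ u > (0:ℝ), 0 ≤ besselI μ (x*u) * besselK μ u - besselI μ u * besselK μ (x*u) := by
  intro u hu
  have hu_le : u ≤ x * u := le_mul_of_one_le_left hu.le hx.le
  have hxu : 0 < x * u := hu.trans_le hu_le
  have hI : besselI μ u ≤ besselI μ (x * u) := besselI_monotoneOn hμ hu.le hxu.le hu_le
  have hK : besselK μ (x * u) ≤ besselK μ u := besselK_antitoneOn μ hu hxu hu_le
  have := mul_le_mul hI hK (besselK_nonneg μ _) (besselI_nonneg hμ hxu.le)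
  linarith
end

section
/- Suppose q : (0,∞) → [0,∞) is measurable, integrable, and satisfies t^{μ+1} q(t) → C as t → ∞ for some constants μ > 0 and C > 0, and sup_{t>1} t^{μ+1} q(t) < ∞. Then for n ≥ 2, ρ^{n-1+2μ} ∫₀^∞ e^{-ρ²/(4t)} q(t) t^{-(n-1)/2} dt → C · 2^{2μ+n-1} Γ(μ + (n-1)/2) as ρ → ∞. -/
/-!
Write `ν = (n - 1) / 2`, `κ = μ + ν`, and split the integral at a point `T` beyond which
`t ^ (μ + 1) * q t` is bounded. With `x = ρ² / (4t)` one has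
`ρ ^ (2κ) e^{-x} t^{-ν} = 4 ^ κ t ^ μ x ^ κ e^{-x}` and `x ^ κ e^{-x} ≤ κ ^ κ`, so on `(0, T]`
dominated convergence against `|q|` sends the contribution to `0`. On `(T, ∞)` the substitution
`t = ρ² / (4s)` turns the rescaled integral into `∫ 4 ^ κ e^{-s} s ^ (κ - 1) h(ρ² / (4s)) ds`
with `h x = x ^ (μ + 1) q x` bounded and tending to `C`, so dominated convergence gives
`C 4 ^ κ Γ(κ)`.
-/

open MeasureTheory Set Real Filter

theorem rpow_mul_exp_neg_le {s x : ℝ} (hs : 0 < s) (hx : 0 ≤ x) : x ^ s * exp (-x) ≤ s ^ s := by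
  have hlin : x / s ≤ exp (x / s) := by linarith [add_one_le_exp (x / s)]
  have hpow : (x / s) ^ s ≤ exp x := by
    calc (x / s) ^ s ≤ exp (x / s) ^ s := by gcongr
      _ = exp x := by rw [← exp_mul, div_mul_cancel₀ x hs.ne']
  rw [div_rpow hx hs.le, div_le_iff₀ (by positivity)] at hpow
  calc x ^ s * exp (-x) ≤ exp x * s ^ s * exp (-x) := by gcongr
    _ = s ^ s := by rw [mul_comm (exp x), mul_assoc, ← exp_add, add_neg_cancel, exp_zero, mul_one]

theorem rpow_mul_exp_neg_sq_div_mul_rpow_neg_eq {ρ t : ℝ} (μ ν : ℝ) (hρ : 0 ≤ ρ) (ht : 0 < t) :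
    ρ ^ (2 * (μ + ν)) * (exp (-ρ ^ 2 / (4 * t)) * t ^ (-ν)) =
      4 ^ (μ + ν) * t ^ μ * ((ρ ^ 2 / (4 * t)) ^ (μ + ν) * exp (-(ρ ^ 2 / (4 * t)))) := by
  have hsplit : t ^ (-ν) = t ^ μ / t ^ (μ + ν) := by
    rw [← rpow_sub ht]; ring_nf
  rw [div_rpow (by positivity) (by positivity), mul_rpow (by norm_num) ht.le, rpow_mul hρ,
    ← rpow_natCast, neg_div, hsplit]
  field_simp
  norm_num

theorem exp_neg_sq_div_mul_rpow_neg_le {ρ t ν : ℝ} (hν : 0 < ν) (hρ : 0 < ρ) (ht : 0 < t) :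
    exp (-ρ ^ 2 / (4 * t)) * t ^ (-ν) ≤ 4 ^ ν * ν ^ ν / ρ ^ (2 * ν) := by
  have key := rpow_mul_exp_neg_sq_div_mul_rpow_neg_eq 0 ν hρ.le ht
  simp only [zero_add, rpow_zero, mul_one] at key
  rw [le_div_iff₀ (by positivity), mul_comm, key]
  gcongr
  exact rpow_mul_exp_neg_le hν (by positivity)

theorem setIntegral_Ioi_eq_setIntegral_comp_div {E : Type*} [NormedAddCommGroup E]
    [NormedSpace ℝ E] (g : ℝ → E) {a : ℝ} (ha : 0 < a) :
    ∫ t in Ioi 0, g t = ∫ s in Ioi 0, (a / s ^ 2) • g (a / s) := by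
  have himage : (fun s : ℝ => a / s) '' Ioi 0 = Ioi 0 := by
    ext t
    refine ⟨?_, fun ht => ⟨a / t, div_pos ha ht, div_div_cancel₀ ha.ne'⟩⟩
    rintro ⟨s, hs, rfl⟩
    exact div_pos ha hs
  have hderiv : ∀ s ∈ Ioi (0:ℝ), HasDerivWithinAt (fun s => a / s) (-(a / s ^ 2)) (Ioi 0) s := by
    intro s hs
    simpa [div_eq_mul_inv] using
      ((hasDerivAt_inv (ne_of_gt hs)).const_mul a).hasDerivWithinAt (s := Ioi 0)
  have hinj : InjOn (fun s : ℝ => a / s) (Ioi 0) := fun s _ s' _ h => by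
    simpa [ha.ne'] using congrArg (a / ·) h
  rw [← himage, integral_image_eq_integral_abs_deriv_smul measurableSet_Ioi hderiv hinj, himage]
  refine setIntegral_congr_fun measurableSet_Ioi fun s hs => ?_
  rw [abs_neg, abs_of_pos (div_pos ha (pow_pos hs 2))]

theorem integrableOn_exp_neg_sq_div_mul_rpow_neg {q : ℝ → ℝ} {ρ ν : ℝ} (hν : 0 < ν) (hρ : 0 < ρ)
    (hq : IntegrableOn q (Ioi 0)) :
    IntegrableOn (fun t => exp (-ρ ^ 2 / (4 * t)) * q t * t ^ (-ν)) (Ioi 0) := by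
  have hexp : Measurable fun t : ℝ => exp (-ρ ^ 2 / (4 * t)) := by fun_prop
  have hpow : Measurable fun t : ℝ => t ^ (-ν) := by fun_prop
  refine Integrable.mono' (hq.norm.const_mul (4 ^ ν * ν ^ ν / ρ ^ (2 * ν)))
    ((hexp.aestronglyMeasurable.mul hq.1).mul hpow.aestronglyMeasurable) ?_
  filter_upwards [ae_restrict_mem measurableSet_Ioi] with t (ht : 0 < t)
  rw [norm_mul, norm_mul, mul_right_comm, ← norm_mul, norm_of_nonneg (by positivity)]
  gcongr
  exact exp_neg_sq_div_mul_rpow_neg_le hν hρ ht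

theorem setIntegral_Ioi_eq_setIntegral_Ioc_add_indicator {f : ℝ → ℝ} {T : ℝ} (hT : 0 ≤ T)
    (hf : IntegrableOn f (Ioi 0)) :
    ∫ t in Ioi 0, f t = (∫ t in Ioc 0 T, f t) + ∫ t in Ioi 0, (Ioi T).indicator f t := by
  rw [← Ioc_union_Ioi_eq_Ioi hT, setIntegral_union (Ioc_disjoint_Ioi le_rfl) measurableSet_Ioi
    (hf.mono_set Ioc_subset_Ioi_self) (hf.mono_set (Ioi_subset_Ioi hT)), Ioc_union_Ioi_eq_Ioi hT,
    setIntegral_indicator measurableSet_Ioi, inter_eq_self_of_subset_right (Ioi_subset_Ioi hT)]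

theorem tendsto_rpow_mul_setIntegral_Ioc_exp_neg_sq_div {f : ℝ → ℝ} {μ ν T : ℝ} (hμ : 0 ≤ μ)
    (hκ : 0 < μ + ν) (hf : IntegrableOn f (Ioc 0 T)) :
    Tendsto (fun ρ => ρ ^ (2 * (μ + ν)) * ∫ t in Ioc 0 T, exp (-ρ ^ 2 / (4 * t)) * f t * t ^ (-ν))
      atTop (nhds 0) := by
  have hfactor : ∀ ρ ≥ 0, ∀ t > 0, ρ ^ (2 * (μ + ν)) * (exp (-ρ ^ 2 / (4 * t)) * f t * t ^ (-ν)) =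
      4 ^ (μ + ν) * t ^ μ * f t * ((ρ ^ 2 / (4 * t)) ^ (μ + ν) * exp (-(ρ ^ 2 / (4 * t)))) := by
    intro ρ hρ t ht
    rw [mul_right_comm _ (f t), ← mul_assoc, rpow_mul_exp_neg_sq_div_mul_rpow_neg_eq μ ν hρ ht]
    ring
  simp_rw [← integral_const_mul]
  suffices h : Tendsto _ atTop (nhds (∫ _ in Ioc 0 T, (0 : ℝ))) by simpa using h
  refine tendsto_integral_filter_of_dominated_convergence
    (fun t => 4 ^ (μ + ν) * T ^ μ * (μ + ν) ^ (μ + ν) * ‖f t‖) ?_ ?_ (hf.norm.const_mul _) ?_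
  · have hexp (ρ : ℝ) : Measurable fun t : ℝ => exp (-ρ ^ 2 / (4 * t)) := by fun_prop
    have hpow : Measurable fun t : ℝ => t ^ (-ν) := by fun_prop
    exact .of_forall fun ρ => (((hexp ρ).aestronglyMeasurable.mul hf.1).mul
      hpow.aestronglyMeasurable).const_mul _
  · filter_upwards [eventually_ge_atTop 0] with ρ hρ
    filter_upwards [ae_restrict_mem measurableSet_Ioc] with t ⟨ht0, htT⟩
    rw [hfactor ρ hρ t ht0, norm_mul, norm_mul, mul_right_comm]
    have : 0 ≤ T ^ μ := rpow_nonneg (ht0.le.trans htT) μ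
    gcongr
    · rw [norm_of_nonneg (by positivity)]
      gcongr
    · rw [norm_of_nonneg (by positivity)]
      exact rpow_mul_exp_neg_le hκ (by positivity)
  · filter_upwards [ae_restrict_mem measurableSet_Ioc] with t ht
    have hx : Tendsto (fun ρ : ℝ => ρ ^ 2 / (4 * t)) atTop atTop :=
      (tendsto_pow_atTop two_ne_zero).atTop_div_const (by linarith [ht.1])
    have hdecay := (tendsto_rpow_mul_exp_neg_mul_atTop_nhds_zero (μ + ν) 1 one_pos).comp hx
    simp only [neg_one_mul, Function.comp_def] at hdecay
    simpa using (hdecay.const_mul (4 ^ (μ + ν) * t ^ μ * f t)).congr'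
      (by filter_upwards [eventually_ge_atTop 0] with ρ hρ using (hfactor ρ hρ t ht.1).symm)

theorem rpow_mul_div_sq_mul_exp_neg_sq_div_comp_div_eq {ρ s : ℝ} (μ ν y : ℝ) (hρ : 0 < ρ)
    (hs : 0 < s) :
    ρ ^ (2 * (μ + ν)) * (ρ ^ 2 / 4 / s ^ 2 *
      (exp (-ρ ^ 2 / (4 * (ρ ^ 2 / 4 / s))) * y * (ρ ^ 2 / 4 / s) ^ (-ν))) =
      4 ^ (μ + ν) * (exp (-s) * s ^ (μ + ν - 1)) * ((ρ ^ 2 / 4 / s) ^ (μ + 1) * y) := by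
  have ht : 0 < ρ ^ 2 / 4 / s := by positivity
  have key := rpow_mul_exp_neg_sq_div_mul_rpow_neg_eq μ ν hρ.le ht
  rw [show ρ ^ 2 / (4 * (ρ ^ 2 / 4 / s)) = s by field_simp] at key
  calc _ = ρ ^ 2 / 4 / s ^ 2 * y * (ρ ^ (2 * (μ + ν)) *
        (exp (-ρ ^ 2 / (4 * (ρ ^ 2 / 4 / s))) * (ρ ^ 2 / 4 / s) ^ (-ν))) := by ring
    _ = _ := by
      rw [key, rpow_add_one ht.ne', rpow_sub_one hs.ne']
      field_simp

theorem tendsto_rpow_mul_setIntegral_Ioi_exp_neg_sq_div {q : ℝ → ℝ} {μ ν C M : ℝ}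
    (hκ : 0 < μ + ν) (hq : Measurable q) (hM : ∀ x > 0, |x ^ (μ + 1) * q x| ≤ M)
    (hlim : Tendsto (fun x => x ^ (μ + 1) * q x) atTop (nhds C)) :
    Tendsto (fun ρ => ρ ^ (2 * (μ + ν)) * ∫ t in Ioi 0, exp (-ρ ^ 2 / (4 * t)) * q t * t ^ (-ν))
      atTop (nhds (C * 4 ^ (μ + ν) * Gamma (μ + ν))) := by
  have hcov : ∀ ρ > 0, ρ ^ (2 * (μ + ν)) * ∫ t in Ioi 0, exp (-ρ ^ 2 / (4 * t)) * q t * t ^ (-ν) =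
      ∫ s in Ioi 0, 4 ^ (μ + ν) * (exp (-s) * s ^ (μ + ν - 1)) *
        ((ρ ^ 2 / 4 / s) ^ (μ + 1) * q (ρ ^ 2 / 4 / s)) := by
    intro ρ hρ
    rw [setIntegral_Ioi_eq_setIntegral_comp_div _ (by positivity : 0 < ρ ^ 2 / 4),
      ← integral_const_mul]
    exact setIntegral_congr_fun measurableSet_Ioi fun s hs =>
      rpow_mul_div_sq_mul_exp_neg_sq_div_comp_div_eq μ ν _ hρ hs
  have hΓ : ∫ s in Ioi 0, 4 ^ (μ + ν) * (exp (-s) * s ^ (μ + ν - 1)) * C =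
      C * 4 ^ (μ + ν) * Gamma (μ + ν) := by
    rw [integral_mul_const, integral_const_mul, Gamma_eq_integral hκ]
    ring
  rw [← hΓ]
  refine (tendsto_integral_filter_of_dominated_convergence
    (fun s => 4 ^ (μ + ν) * (exp (-s) * s ^ (μ + ν - 1)) * M) ?_ ?_
    (((GammaIntegral_convergent hκ).const_mul _).mul_const _) ?_).congr'
    (by filter_upwards [eventually_gt_atTop 0] with ρ hρ using (hcov ρ hρ).symm)
  · exact .of_forall fun ρ => by fun_prop
  · filter_upwards [eventually_gt_atTop 0] with ρ hρ
    filter_upwards [ae_restrict_mem measurableSet_Ioi] with s (hs : 0 < s)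
    rw [norm_mul, norm_of_nonneg (by positivity : 0 ≤ 4 ^ (μ + ν) * (exp (-s) * s ^ (μ + ν - 1))),
      Real.norm_eq_abs]
    gcongr
    exact hM _ (by positivity)
  · filter_upwards [ae_restrict_mem measurableSet_Ioi] with s hs
    have hx : Tendsto (fun ρ : ℝ => ρ ^ 2 / 4 / s) atTop atTop :=
      ((tendsto_pow_atTop two_ne_zero).atTop_div_const (by norm_num)).atTop_div_const hs
    exact (hlim.comp hx).const_mul _

theorem tendsto_rpow_mul_setIntegral_Ioi_exp_neg_sq_div_indicator {q : ℝ → ℝ} {μ ν C M T : ℝ}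
    (hκ : 0 < μ + ν) (hq : Measurable q) (hM : ∀ x ≥ T, |x ^ (μ + 1) * q x| ≤ M)
    (hlim : Tendsto (fun x => x ^ (μ + 1) * q x) atTop (nhds C)) :
    Tendsto (fun ρ => ρ ^ (2 * (μ + ν)) *
        ∫ t in Ioi 0, exp (-ρ ^ 2 / (4 * t)) * (Ioi T).indicator q t * t ^ (-ν))
      atTop (nhds (C * 4 ^ (μ + ν) * Gamma (μ + ν))) := by
  refine tendsto_rpow_mul_setIntegral_Ioi_exp_neg_sq_div (M := max M 0) hκ
    (hq.indicator measurableSet_Ioi) (fun x _ => ?_) (hlim.congr' ?_)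
  · by_cases hx : x ∈ Ioi T
    · rw [indicator_of_mem hx]
      exact (hM x hx.le).trans (le_max_left M 0)
    · rw [indicator_of_notMem hx, mul_zero, abs_zero]
      exact le_max_right M 0
  · filter_upwards [eventually_gt_atTop T] with x (hx : x ∈ Ioi T)
    rw [indicator_of_mem hx]

theorem stmt_15_general (q : ℝ → ℝ) (μ C : ℝ) (hμ : 0 < μ)
    (hmeas : Measurable q)
    (hint : IntegrableOn q (Ioi 0))
    (hasym : Tendsto (fun t : ℝ => t ^ (μ+1) * q t) atTop (nhds C))
    (n : ℕ) (hn : 2 ≤ n) :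
    Tendsto (fun ρ : ℝ =>
        ρ ^ ((n:ℝ) - 1 + 2*μ) *
          ∫ t in Ioi (0:ℝ), Real.exp (-ρ^2/(4*t)) * q t * t ^ (-(((n:ℝ)-1)/2)))
      atTop (nhds (C * (2:ℝ) ^ (2*μ + (n:ℝ) - 1) * Real.Gamma (μ + ((n:ℝ)-1)/2))) := by
  set ν : ℝ := ((n:ℝ) - 1) / 2
  have hn' : (2:ℝ) ≤ n := by exact_mod_cast hn
  have hν : 0 < ν := div_pos (by linarith) two_pos
  obtain ⟨M, hM⟩ : ∃ M, ∀ᶠ x in atTop, |x ^ (μ + 1) * q x| ≤ M :=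
    hasym.abs.isBoundedUnder_le
  obtain ⟨T, hT⟩ := (hM.and (eventually_ge_atTop 0)).exists_forall_of_atTop
  have hsplit : ∀ ρ > 0, ∫ t in Ioi 0, exp (-ρ ^ 2 / (4 * t)) * q t * t ^ (-ν) =
      (∫ t in Ioc 0 T, exp (-ρ ^ 2 / (4 * t)) * q t * t ^ (-ν)) +
        ∫ t in Ioi 0, exp (-ρ ^ 2 / (4 * t)) * (Ioi T).indicator q t * t ^ (-ν) := by
    intro ρ hρ
    rw [setIntegral_Ioi_eq_setIntegral_Ioc_add_indicator (hT T le_rfl).2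
      (integrableOn_exp_neg_sq_div_mul_rpow_neg hν hρ hint)]
    congr 2 with t
    by_cases ht : t ∈ Ioi T <;> simp [ht]
  have hnear := tendsto_rpow_mul_setIntegral_Ioc_exp_neg_sq_div hμ.le (by linarith : 0 < μ + ν)
    (hint.mono_set (Ioc_subset_Ioi_self : Ioc 0 T ⊆ Ioi 0))
  have hfar := tendsto_rpow_mul_setIntegral_Ioi_exp_neg_sq_div_indicator (by linarith) hmeas
    (fun x hx => (hT x hx).1) hasym
  have h4 : (2:ℝ) ^ (2 * μ + n - 1) = 4 ^ (μ + ν) := by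
    rw [show 2 * μ + n - 1 = 2 * (μ + ν) by ring, rpow_mul (by norm_num)]
    norm_num
  rw [show (n:ℝ) - 1 + 2 * μ = 2 * (μ + ν) by ring, h4, ← zero_add (C * _ * _)]
  refine (hnear.add hfar).congr' ?_
  filter_upwards [eventually_gt_atTop 0] with ρ hρ
  rw [hsplit ρ hρ]
  ring

theorem stmt_15 (q : ℝ → ℝ) (μ C : ℝ) (hμ : 0 < μ) (hC : 0 < C)
    (hmeas : Measurable q) (hnn : ∀ t > (0:ℝ), 0 ≤ q t)
    (hint : IntegrableOn q (Ioi 0))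
    (hasym : Tendsto (fun t : ℝ => t ^ (μ+1) * q t) atTop (nhds C))
    (hbdd : ∃ M : ℝ, ∀ t > (1:ℝ), t ^ (μ+1) * q t ≤ M)
    (n : ℕ) (hn : 2 ≤ n) :
    Tendsto (fun ρ : ℝ =>
        ρ ^ ((n:ℝ) - 1 + 2*μ) *
          ∫ t in Ioi (0:ℝ), Real.exp (-ρ^2/(4*t)) * q t * t ^ (-(((n:ℝ)-1)/2)))
      atTop (nhds (C * (2:ℝ) ^ (2*μ + (n:ℝ) - 1) * Real.Gamma (μ + ((n:ℝ)-1)/2))) :=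
  stmt_15_general q μ C hμ hmeas hint hasym n hn
end
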